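/- arXiv:2012.10350 — 2 statements merged into one kernel-verified Lean document; each statement's English description precedes it below -/
import Mathlib

section
/- For ρ ∈ [0,1] and Ṙ > 0, define E₀(ρ, Ṙ) = ρ/((ρ+1)N₀) − ρṘ/log e. Then the maximum of E₀(ρ, Ṙ) over ρ ∈ [0,1] equals 1/(2N₀) − Ṙ/log e if 0 < Ṙ ≤ (log e)/(4N₀), and equals (√(1/N₀) − √(Ṙ/log e))² if (log e)/(4N₀) ≤ Ṙ ≤ (log e)/N₀, the latter maximum being attained at ρ = √((log e)/(N₀Ṙ)) − 1. -/
/-!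
Writing `a = √(1/N₀)` and `b = √(Ṙ/log e)`, one has
`E₀(ρ, Ṙ) = a² + b² - (a²/(ρ+1) + (ρ+1) b²)`, and by AM-GM `a²/t + t b² ≥ 2ab` with equality
at `t = a/b`. Hence `E₀ ≤ (a - b)²`, with equality at `ρ = a/b - 1`, which lies in `[0, 1]`
exactly in the high-rate regime. In the low-rate regime
`E₀(1) - E₀(ρ) = (1 - ρ)(a²/(2(ρ+1)) - b²)` is nonnegative on `[0, 1]`.
-/

open Real

lemma two_mul_mul_le_sq_div_add_mul_sq (x y : ℝ) {t : ℝ} (ht : 0 < t) :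
    2 * x * y ≤ x ^ 2 / t + t * y ^ 2 := by
  rw [div_add' _ _ _ ht.ne', le_div_iff₀ ht]
  nlinarith [sq_nonneg (x - t * y)]

lemma sq_div_div_add_div_mul_sq (x : ℝ) {y : ℝ} (hy : y ≠ 0) :
    x ^ 2 / (x / y) + x / y * y ^ 2 = 2 * x * y := by
  field_simp
  ring

/-- The error exponent `E₀(ρ, Ṙ)` of orthogonal codes per unit energy, with `L = log e`. -/
noncomputable def orthogonalE0 (N0 R L ρ : ℝ) : ℝ := ρ / ((ρ + 1) * N0) - ρ * R / L

section orthogonalE0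

variable {N0 R L ρ : ℝ}

lemma orthogonalE0_eq (hN0 : N0 ≠ 0) (hρ : ρ + 1 ≠ 0) :
    orthogonalE0 N0 R L ρ = 1 / N0 + R / L - (1 / N0 / (ρ + 1) + (ρ + 1) * (R / L)) := by
  unfold orthogonalE0
  field_simp
  ring

lemma orthogonalE0_le_sq_sub_sqrt (hN0 : 0 < N0) (hRL : 0 ≤ R / L) (hρ : 0 < ρ + 1) :
    orthogonalE0 N0 R L ρ ≤ (√(1 / N0) - √(R / L)) ^ 2 := by
  have amgm := two_mul_mul_le_sq_div_add_mul_sq √(1 / N0) √(R / L) hρ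
  rw [sq_sqrt (by positivity), sq_sqrt hRL] at amgm
  rw [orthogonalE0_eq hN0.ne' hρ.ne', sub_sq, sq_sqrt (by positivity), sq_sqrt hRL]
  linarith

lemma orthogonalE0_sqrt_sub_one (hN0 : 0 < N0) (hRL : 0 < R / L) :
    orthogonalE0 N0 R L (√(L / (N0 * R)) - 1) = (√(1 / N0) - √(R / L)) ^ 2 := by
  have ha : √(1 / N0) ≠ 0 := (sqrt_pos.2 (by positivity)).ne'
  have hb : √(R / L) ≠ 0 := (sqrt_pos.2 hRL).ne'
  have hR : R ≠ 0 := by rintro rfl; simp at hRL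
  have hL : L ≠ 0 := by rintro rfl; simp at hRL
  have ht : √(L / (N0 * R)) = √(1 / N0) / √(R / L) := by
    rw [← sqrt_div (by positivity)]
    congr 1
    field_simp
  have hmin := sq_div_div_add_div_mul_sq √(1 / N0) hb
  rw [sq_sqrt (by positivity), sq_sqrt hRL.le] at hmin
  rw [orthogonalE0_eq hN0.ne' (by rw [sub_add_cancel, ht]; exact div_ne_zero ha hb),
    sub_add_cancel, ht, hmin, sub_sq, sq_sqrt (by positivity), sq_sqrt hRL.le]
  ring

lemma orthogonalE0_one (N0 R L : ℝ) : orthogonalE0 N0 R L 1 = 1 / (2 * N0) - R / L := by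
  unfold orthogonalE0
  norm_num

lemma orthogonalE0_one_sub (hN0 : N0 ≠ 0) (hρ : ρ + 1 ≠ 0) :
    orthogonalE0 N0 R L 1 - orthogonalE0 N0 R L ρ
      = (1 - ρ) * (1 / (2 * (ρ + 1) * N0) - R / L) := by
  unfold orthogonalE0
  field_simp
  ring

lemma orthogonalE0_le_one (hN0 : 0 < N0) (hRL : R / L ≤ 1 / (4 * N0)) (hρ : ρ ∈ Set.Icc 0 1) :
    orthogonalE0 N0 R L ρ ≤ orthogonalE0 N0 R L 1 := by
  obtain ⟨hρ0, hρ1⟩ := hρ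
  have hquarter : 1 / (4 * N0) ≤ 1 / (2 * (ρ + 1) * N0) :=
    one_div_le_one_div_of_le (by positivity) (by nlinarith)
  have hdiff := orthogonalE0_one_sub (R := R) (L := L) hN0.ne' (by linarith : ρ + 1 ≠ 0)
  nlinarith

end orthogonalE0

lemma sqrt_div_sub_one_mem_Icc {N0 R L : ℝ} (hN0 : 0 < N0)
    (hlow : L / (4 * N0) ≤ R) (hhigh : R ≤ L / N0) (hR : 0 < R) :
    √(L / (N0 * R)) - 1 ∈ Set.Icc (0 : ℝ) 1 := by
  have hNR : 0 < N0 * R := by positivity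
  have h1 : 1 ≤ √(L / (N0 * R)) := by
    rw [one_le_sqrt, le_div_iff₀ hNR]
    rw [le_div_iff₀ hN0] at hhigh
    linarith
  have h2 : √(L / (N0 * R)) ≤ 2 := by
    rw [sqrt_le_left zero_le_two, div_le_iff₀ hNR]
    rw [div_le_iff₀ (by positivity)] at hlow
    linarith
  constructor <;> linarith

/-- Maximization of the error exponent `E₀(ρ, Ṙ) = ρ/((ρ+1)N₀) - ρṘ/log e`
over `ρ ∈ [0,1]`: for low rates the maximum is at `ρ = 1` with value
`1/(2N₀) - Ṙ/log e`; for high rates the maximum is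
`(√(1/N₀) - √(Ṙ/log e))²`, attained at `ρ = √(log e/(N₀ Ṙ)) - 1`. -/
theorem error_exponent_max
    (N0 R L : ℝ) (hN0 : 0 < N0) (hL : L = Real.logb 2 (Real.exp 1)) :
    ((0 < R ∧ R ≤ L / (4 * N0)) →
      IsGreatest ((fun ρ => ρ / ((ρ + 1) * N0) - ρ * R / L) '' Set.Icc (0 : ℝ) 1)
        (1 / (2 * N0) - R / L)) ∧
    ((L / (4 * N0) ≤ R ∧ R ≤ L / N0) →
      IsGreatest ((fun ρ => ρ / ((ρ + 1) * N0) - ρ * R / L) '' Set.Icc (0 : ℝ) 1)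
          ((Real.sqrt (1 / N0) - Real.sqrt (R / L)) ^ 2) ∧
        (fun ρ => ρ / ((ρ + 1) * N0) - ρ * R / L) (Real.sqrt (L / (N0 * R)) - 1)
          = (Real.sqrt (1 / N0) - Real.sqrt (R / L)) ^ 2) := by
  have hL0 : 0 < L := by
    rw [hL, logb, log_exp]
    positivity
  constructor
  · rintro ⟨-, hR⟩
    have hRL : R / L ≤ 1 / (4 * N0) := by
      rwa [div_le_iff₀ hL0, one_div_mul_eq_div]
    exact ⟨⟨1, ⟨zero_le_one, le_rfl⟩, orthogonalE0_one N0 R L⟩, Set.forall_mem_image.2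
      fun ρ hρ ↦ (orthogonalE0_le_one hN0 hRL hρ).trans_eq (orthogonalE0_one N0 R L)⟩
  · rintro ⟨hlow, hhigh⟩
    have hR : 0 < R := (by positivity : 0 < L / (4 * N0)).trans_le hlow
    have hRL : 0 < R / L := div_pos hR hL0
    have hmax := orthogonalE0_sqrt_sub_one (R := R) hN0 hRL
    refine ⟨⟨⟨_, sqrt_div_sub_one_mem_Icc hN0 hlow hhigh hR, hmax⟩, ?_⟩, hmax⟩
    exact Set.forall_mem_image.2 fun ρ hρ ↦
      orthogonalE0_le_sq_sub_sqrt hN0 hRL.le (by linarith [hρ.1])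
end

section
/- Let Q be the standard Gaussian tail function. If a sequence (M_n, E_n) satisfies M_n ≥ 2 and 1/M_n ≥ Q(√(2E_n/N₀) + Q^{-1}(1 − ε_n)) with ε_n → 0, then E_n → ∞. -/
open MeasureTheory Filter

noncomputable def gaussQ (x : ℝ) : ℝ :=
  ∫ t in Set.Ioi x, (1 / Real.sqrt (2 * Real.pi)) * Real.exp (-t ^ 2 / 2)

lemma gpdf_eq : (fun t : ℝ => (1 / Real.sqrt (2 * Real.pi)) * Real.exp (-t ^ 2 / 2))
    = fun t : ℝ => (1 / Real.sqrt (2 * Real.pi)) * Real.exp (-(1/2) * t ^ 2) := by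
  funext t; ring_nf

lemma integrable_gpdf :
    Integrable (fun t : ℝ => (1 / Real.sqrt (2 * Real.pi)) * Real.exp (-t ^ 2 / 2)) := by
  rw [gpdf_eq]
  exact (integrable_exp_neg_mul_sq (by norm_num)).const_mul _

lemma gpdf_pos (t : ℝ) : 0 < (1 / Real.sqrt (2 * Real.pi)) * Real.exp (-t ^ 2 / 2) := by
  have : 0 < Real.sqrt (2 * Real.pi) := Real.sqrt_pos.2 (by positivity)
  positivity

lemma integral_gpdf :
    ∫ t : ℝ, (1 / Real.sqrt (2 * Real.pi)) * Real.exp (-t ^ 2 / 2) = 1 := by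
  rw [gpdf_eq]
  rw [MeasureTheory.integral_const_mul, integral_gaussian]
  have h2 : Real.sqrt (2 * Real.pi) ≠ 0 := by positivity
  rw [show Real.pi / (1/2) = 2 * Real.pi by ring]
  field_simp

lemma gaussQ_strictAnti : StrictAnti gaussQ := by
  intro x y hxy
  have hsplit : gaussQ x
      = (∫ t in Set.Ioc x y, (1 / Real.sqrt (2 * Real.pi)) * Real.exp (-t ^ 2 / 2))
        + gaussQ y := by
    rw [gaussQ, gaussQ, ← Set.Ioc_union_Ioi_eq_Ioi hxy.le,
      setIntegral_union (Set.Ioc_disjoint_Ioi le_rfl) measurableSet_Ioi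
        (integrable_gpdf.integrableOn) (integrable_gpdf.integrableOn)]
  have hpos : 0 < ∫ t in Set.Ioc x y, (1 / Real.sqrt (2 * Real.pi)) * Real.exp (-t ^ 2 / 2) := by
    rw [← intervalIntegral.integral_of_le hxy.le]
    exact intervalIntegral.intervalIntegral_pos_of_pos
      integrable_gpdf.intervalIntegrable gpdf_pos hxy
  linarith [hsplit]

lemma gaussQ_lt_one (x : ℝ) : gaussQ x < 1 := by
  have hsplit : (∫ t in Set.Iic x, (1 / Real.sqrt (2 * Real.pi)) * Real.exp (-t ^ 2 / 2))
      + gaussQ x = 1 := by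
    rw [gaussQ, intervalIntegral.integral_Iic_add_Ioi integrable_gpdf.integrableOn integrable_gpdf.integrableOn]
    exact integral_gpdf
  have hpos : 0 < ∫ t in Set.Iic x, (1 / Real.sqrt (2 * Real.pi)) * Real.exp (-t ^ 2 / 2) := by
    have h1 : 0 < ∫ t in Set.Ioc (x-1) x, (1 / Real.sqrt (2 * Real.pi)) * Real.exp (-t ^ 2 / 2) := by
      rw [← intervalIntegral.integral_of_le (by linarith : x - 1 ≤ x)]
      exact intervalIntegral.intervalIntegral_pos_of_pos
        integrable_gpdf.intervalIntegrable gpdf_pos (by linarith)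
    have h2 : (∫ t in Set.Ioc (x-1) x, (1 / Real.sqrt (2 * Real.pi)) * Real.exp (-t ^ 2 / 2))
        ≤ ∫ t in Set.Iic x, (1 / Real.sqrt (2 * Real.pi)) * Real.exp (-t ^ 2 / 2) := by
      apply setIntegral_mono_set integrable_gpdf.integrableOn
        (Filter.Eventually.of_forall fun t => (gpdf_pos t).le)
      exact Filter.Eventually.of_forall (fun t ht => ht.2)
    linarith
  linarith

lemma gaussQ_zero : gaussQ 0 = 1/2 := by
  have hsplit : (∫ t in Set.Iic (0:ℝ), (1 / Real.sqrt (2 * Real.pi)) * Real.exp (-t ^ 2 / 2))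
      + gaussQ 0 = 1 := by
    rw [gaussQ, intervalIntegral.integral_Iic_add_Ioi integrable_gpdf.integrableOn integrable_gpdf.integrableOn]
    exact integral_gpdf
  have hsym : (∫ t in Set.Iic (0:ℝ), (1 / Real.sqrt (2 * Real.pi)) * Real.exp (-t ^ 2 / 2))
      = gaussQ 0 := by
    rw [gaussQ]
    rw [show Set.Iic (0:ℝ) = Set.Iic (-(0:ℝ)) by norm_num,
      ← integral_comp_neg_Ioi]
    congr 1
    funext t
    ring_nf
  linarith

/-- If `Mₙ ≥ 2`, `εₙ → 0`, `εₙ ∈ (0,1)` and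
`1/Mₙ ≥ Q(√(2Eₙ/N₀) + Q⁻¹(1 - εₙ))`, then `Eₙ → ∞`. -/
theorem energy_tendsto_atTop_of_vanishing_error
    (N0 : ℝ) (hN0 : 0 < N0)
    (M E eps : ℕ → ℝ) (Qinv : ℝ → ℝ)
    (hQinv : ∀ y, 0 < y → y < 1 → gaussQ (Qinv y) = y)
    (hM : ∀ n, 2 ≤ M n) (hE : ∀ n, 0 ≤ E n)
    (heps : ∀ n, eps n ∈ Set.Ioo (0 : ℝ) 1)
    (h : ∀ n, gaussQ (Real.sqrt (2 * E n / N0) + Qinv (1 - eps n)) ≤ 1 / M n)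
    (heps0 : Filter.Tendsto eps Filter.atTop (nhds 0)) :
    Filter.Tendsto E Filter.atTop Filter.atTop := by
  set s : ℕ → ℝ := fun n => Real.sqrt (2 * E n / N0) with hs
  set a : ℕ → ℝ := fun n => Qinv (1 - eps n) with ha
  have haQ : ∀ n, gaussQ (a n) = 1 - eps n := fun n =>
    hQinv _ (by linarith [(heps n).2]) (by linarith [(heps n).1])
  -- a → -∞
  have hatop : Tendsto a atTop atBot := by
    rw [tendsto_atBot]
    intro R
    have h1 : gaussQ R < 1 := gaussQ_lt_one R
    have h2 : ∀ᶠ n in atTop, eps n < 1 - gaussQ R :=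
      heps0.eventually_lt_const (by linarith)
    filter_upwards [h2] with n hn
    by_contra hc
    push_neg at hc
    have := gaussQ_strictAnti.antitone hc.le
    rw [haQ n] at this
    linarith
  -- s n + a n ≥ 0
  have hkey : ∀ n, -a n ≤ s n := by
    intro n
    by_contra hc
    push_neg at hc
    have hlt : s n + a n < 0 := by linarith
    have h3 : gaussQ 0 < gaussQ (s n + a n) := gaussQ_strictAnti hlt
    rw [gaussQ_zero] at h3
    have hMn : (0:ℝ) < M n := lt_of_lt_of_le (by norm_num) (hM n)
    have h4 : 1 / M n ≤ 1 / 2 := by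
      apply one_div_le_one_div_of_le (by norm_num) (hM n)
    have := h n
    linarith
  have hstop : Tendsto s atTop atTop :=
    tendsto_atTop_mono hkey (tendsto_neg_atTop_iff.mpr hatop)
  have hEeq : ∀ n, E n = N0 / 2 * (s n)^2 := by
    intro n
    have : (s n)^2 = 2 * E n / N0 := Real.sq_sqrt (div_nonneg (by linarith [hE n]) hN0.le)
    rw [this]; field_simp
  have : Tendsto (fun n => N0 / 2 * (s n)^2) atTop atTop := by
    apply Tendsto.const_mul_atTop (by linarith : (0:ℝ) < N0/2)
    exact (tendsto_pow_atTop (by norm_num)).comp hstop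
  exact this.congr (fun n => (hEeq n).symm)
end
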